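/- If i has children c_1 < ... < c_k in the pss-tree, then for every j with 1 ≤ j < k, nss[c_j] = c_{j+1}. -/

import Mathlib

/-- Strict lexicographic order on strings over a totally ordered alphabet. -/
def Slt {α : Type*} [LinearOrder α] (u v : List α) : Prop := List.Lex (· < ·) u v

/-- `S` is null-terminated: its last character is strictly smaller than every other character. -/
def NullTerminated {α : Type*} [LinearOrder α] (S : List α) : Prop :=
  ∀ i, ∀ _h : i + 1 < S.length, S[S.length - 1]'(by omega) < S[i]'(by omega)

/-- `nss S i` : position of the next smaller suffix of `i` (with `S.drop S.length = ε`). -/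
noncomputable def nss {α : Type*} [LinearOrder α] (S : List α) (i : ℕ) : ℕ :=
  sInf { j | i < j ∧ j ≤ S.length ∧ Slt (S.drop j) (S.drop i) }

/-- `pss S i` : position of the previous smaller suffix of `i`, or `-1` if none exists. -/
noncomputable def pss {α : Type*} [LinearOrder α] (S : List α) (i : ℕ) : ℤ :=
  sSup (insert (-1) { j : ℤ | 0 ≤ j ∧ j < (i : ℤ) ∧ Slt (S.drop j.toNat) (S.drop i) })

/-- A non-empty string is a Lyndon word iff it is smaller than all of its proper suffixes. -/
def IsLyndon {α : Type*} [LinearOrder α] (w : List α) : Prop :=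
  w ≠ [] ∧ ∀ j, 0 < j → j < w.length → Slt w (w.drop j)

/-- `Ls S i` : the Lyndon prefix of the suffix `S.drop i`, which equals `S[i..nss[i])`. -/
noncomputable def Ls {α : Type*} [LinearOrder α] (S : List α) (i : ℕ) : List α :=
  (S.drop i).take (nss S i - i)

section aux

variable {α : Type*} [LinearOrder α]

lemma slt_trans {u v w : List α} (h1 : Slt u v) (h2 : Slt v w) : Slt u w := by
  unfold Slt at *
  exact List.lex_trans lt_trans h1 h2

lemma slt_asymm {u v : List α} (h : Slt u v) : ¬ Slt v u := by
  unfold Slt at *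
  exact asymm h

lemma slt_total {u v : List α} (h : u ≠ v) : Slt u v ∨ Slt v u := by
  unfold Slt
  rcases trichotomous_of (α := List α) (List.Lex (· < ·)) u v with h1 | h1 | h1
  · exact Or.inl h1
  · exact absurd h1 h
  · exact Or.inr h1

lemma drop_ne {S : List α} {a b : ℕ} (ha : a < S.length) (hb : b < S.length)
    (hab : a ≠ b) : S.drop a ≠ S.drop b := by
  intro h
  have := congrArg List.length h
  simp [List.length_drop] at this
  omega

lemma pss_bddAbove (S : List α) (c : ℕ) :
    BddAbove (insert (-1) { j : ℤ | 0 ≤ j ∧ j < (c : ℤ) ∧ Slt (S.drop j.toNat) (S.drop c) }) := by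
  refine ⟨(c : ℤ), ?_⟩
  rintro x (rfl | ⟨_, hx, _⟩)
  · omega
  · omega

lemma pss_spec {S : List α} {c i : ℕ} (h : pss S c = (i : ℤ)) :
    i < c ∧ Slt (S.drop i) (S.drop c) ∧
      ∀ k : ℕ, i < k → k < c → ¬ Slt (S.drop k) (S.drop c) := by
  have hne : (insert (-1) { j : ℤ | 0 ≤ j ∧ j < (c : ℤ) ∧
      Slt (S.drop j.toNat) (S.drop c) }).Nonempty := ⟨-1, Or.inl rfl⟩
  have hmem := Int.csSup_mem hne (pss_bddAbove S c)
  rw [show sSup _ = pss S c from rfl, h] at hmem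
  rcases hmem with h1 | ⟨_, hic, hslt⟩
  · omega
  · have hic' : i < c := by exact_mod_cast hic
    have htoNat : ((i : ℤ)).toNat = i := Int.toNat_natCast i
    rw [htoNat] at hslt
    refine ⟨hic', hslt, ?_⟩
    intro k hik hkc hk
    have hk' : ((k : ℤ)) ∈ insert (-1) { j : ℤ | 0 ≤ j ∧ j < (c : ℤ) ∧
        Slt (S.drop j.toNat) (S.drop c) } := by
      refine Or.inr ⟨by positivity, by exact_mod_cast hkc, ?_⟩
      rw [Int.toNat_natCast]; exact hk
    have := le_csSup (pss_bddAbove S c) hk'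
    rw [show sSup _ = pss S c from rfl, h] at this
    have : k ≤ i := by exact_mod_cast this
    omega

lemma nss_spec {S : List α} {c : ℕ} (hc : c < S.length) :
    c < nss S c ∧ nss S c ≤ S.length ∧ Slt (S.drop (nss S c)) (S.drop c) ∧
      ∀ k : ℕ, c < k → k < nss S c → ¬ (k ≤ S.length ∧ Slt (S.drop k) (S.drop c)) := by
  have hdropc : S.drop c ≠ [] := by
    simp [List.drop_eq_nil_iff]; omega
  have hlenmem : S.length ∈ { j | c < j ∧ j ≤ S.length ∧ Slt (S.drop j) (S.drop c) } := by
    refine ⟨hc, le_refl _, ?_⟩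
    rw [List.drop_length]
    obtain ⟨x, l, hxl⟩ := List.exists_cons_of_ne_nil hdropc
    rw [hxl]
    exact List.Lex.nil
  have hmem := Nat.sInf_mem ⟨S.length, hlenmem⟩
  refine ⟨hmem.1, hmem.2.1, hmem.2.2, ?_⟩
  intro k hck hk ⟨hkl, hslt⟩
  have : nss S c ≤ k := Nat.sInf_le ⟨hck, hkl, hslt⟩
  omega

end aux

/-- for consecutive children `c < c'` of `i` in the `pss`-tree
(no child of `i` lies strictly between them), `nss[c] = c'`. -/
theorem stmt11 {α : Type*} [LinearOrder α] (S : List α) (hS : NullTerminated S)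
    {i c c' : ℕ} (hc : c < S.length) (hc' : c' < S.length)
    (hpc : pss S c = (i : ℤ)) (hpc' : pss S c' = (i : ℤ)) (hlt : c < c')
    (hbetween : ∀ k, c < k → k < c' → pss S k ≠ (i : ℤ)) :
    nss S c = c' := by
  obtain ⟨hic, hslt_ic, hmax_c⟩ := pss_spec hpc
  obtain ⟨hic', hslt_ic', hmax_c'⟩ := pss_spec hpc'
  -- c' is smaller suffix than c
  have hslt_cc' : Slt (S.drop c') (S.drop c) := by
    rcases slt_total (drop_ne hc hc' (by omega)) with h | h
    · exact absurd h (hmax_c' c hic hlt)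
    · exact h
  have hle : nss S c ≤ c' := Nat.sInf_le ⟨hlt, le_of_lt hc', hslt_cc'⟩
  obtain ⟨hcm, hmlen, hslt_m, hmin⟩ := nss_spec (S := S) hc
  set m := nss S c with hm
  by_contra hne
  have hmc' : m < c' := lt_of_le_of_ne hle hne
  have hmlt : m < S.length := lt_trans hmc' hc'
  rcases slt_total (drop_ne (lt_trans hic hc) hmlt (by omega)) with hcase | hcase
  · -- Slt (drop i) (drop m) : then pss S m = i, contradicting hbetween
    refine hbetween m hcm hmc' ?_
    unfold pss
    apply le_antisymm
    · apply csSup_le (α := ℤ) ⟨-1, Or.inl rfl⟩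
      rintro x (rfl | ⟨hx0, hxm, hxslt⟩)
      · omega
      · -- x is a natural number < m with Slt (drop x.toNat) (drop m); show x ≤ i
        by_contra hxi
        push_neg at hxi
        set k := x.toNat with hk
        have hxk : x = (k : ℤ) := (Int.toNat_of_nonneg hx0).symm
        have hik : i < k := by omega
        have hkm : k < m := by omega
        have hkc : Slt (S.drop k) (S.drop c) := slt_trans hxslt hslt_m
        rcases lt_trichotomy k c with h | rfl | h
        · exact hmax_c k hik h hkc
        · exact slt_asymm hslt_m hxslt
        · exact hmin k h hkm ⟨by omega, hkc⟩
    · apply le_csSup (pss_bddAbove S m)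
      refine Or.inr ⟨by positivity, by exact_mod_cast lt_trans hic hcm, ?_⟩
      rw [Int.toNat_natCast]; exact hcase
  · -- Slt (drop m) (drop i) : contradiction with pss c' = i
    have h1 : ¬ Slt (S.drop m) (S.drop c') := hmax_c' m (lt_trans hic hcm) hmc'
    have h2 : Slt (S.drop c') (S.drop m) := by
      rcases slt_total (drop_ne hmlt hc' (by omega)) with h | h
      · exact absurd h h1
      · exact h
    exact slt_asymm hslt_ic' (slt_trans h2 hcase)
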